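/- arXiv:2203.10980 — 9 statements merged into one kernel-verified Lean document; each statement's English description precedes it below -/
import Mathlib

section
/- For every w ∈ 𝒲 and every α ∈ [0,1], the conditional randomization test p-value satisfies Σ_{z ∈ 𝒵} π(z) · 1[P(z, w) ≤ α] ≤ α; that is, for Z distributed according to π, the unconditional probability that P(Z, w) ≤ α is at most α. -/
open scoped Classical

/-- The p-value of a conditional randomization test: for observed
assignment `z` and potential outcomes schedule `w`,
`P(z, w) = (∑_{z* ∈ S_z} π z* · 1[T_z(z*, w) ≤ T_z(z, w)]) / (∑_{z* ∈ S_z} π z*)`,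
where `S (idx z)` is the unique partition class `S_z` containing `z` and
`T (idx z)` is the corresponding test statistic `T_z`. -/
noncomputable def pValue {Z W : Type*} [Fintype Z] {M : ℕ}
    (π : Z → ℝ) (S : Fin M → Finset Z) (T : Fin M → Z → W → ℝ)
    (idx : Z → Fin M) (z : Z) (w : W) : ℝ :=
  (∑ z' ∈ S (idx z), if T (idx z) z' w ≤ T (idx z) z w then π z' else 0) /
    ∑ z' ∈ S (idx z), π z'

/-- Conditional validity on a single partition class. -/
lemma crt_key {Z : Type*} (s : Finset Z) (π : Z → ℝ)
    (hpos : ∀ z ∈ s, 0 < π z) (t : Z → ℝ) (α : ℝ) (hα : 0 ≤ α) :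
    (∑ z ∈ s, if (∑ z' ∈ s, if t z' ≤ t z then π z' else 0) / (∑ z' ∈ s, π z') ≤ α
      then π z else 0) ≤ α * ∑ z ∈ s, π z := by
  classical
  set N := ∑ z' ∈ s, π z' with hN
  have hN0 : 0 ≤ N := Finset.sum_nonneg fun z hz => (hpos z hz).le
  set A := s.filter (fun z =>
    (∑ z' ∈ s, if t z' ≤ t z then π z' else 0) / N ≤ α) with hAdef
  have hLHS : (∑ z ∈ s, if (∑ z' ∈ s, if t z' ≤ t z then π z' else 0) / N ≤ α
      then π z else 0) = ∑ z ∈ A, π z := (Finset.sum_filter _ _).symm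
  rw [hLHS]
  rcases A.eq_empty_or_nonempty with h | h
  · rw [h, Finset.sum_empty]
    positivity
  · obtain ⟨z0, hz0A, hz0max⟩ := Finset.exists_max_image A t h
    have hz0s : z0 ∈ s := (Finset.mem_filter.mp hz0A).1
    have hNpos : 0 < N :=
      Finset.sum_pos' (fun z hz => (hpos z hz).le) ⟨z0, hz0s, hpos z0 hz0s⟩
    have h1 : ∑ z ∈ A, π z ≤ ∑ z' ∈ s, if t z' ≤ t z0 then π z' else 0 := by
      rw [← Finset.sum_filter]
      apply Finset.sum_le_sum_of_subset_of_nonneg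
      · intro z hz
        exact Finset.mem_filter.mpr ⟨(Finset.mem_filter.mp hz).1, hz0max z hz⟩
      · intro z hz _; exact (hpos z (Finset.mem_filter.mp hz).1).le
    have h2 : (∑ z' ∈ s, if t z' ≤ t z0 then π z' else 0) ≤ α * N :=
      (div_le_iff₀ hNpos).mp (Finset.mem_filter.mp hz0A).2
    linarith

/-- unconditional (marginal) validity of the CRT p-value.
For every potential outcomes schedule `w` and every `α ∈ [0,1]`,
`∑_{z ∈ 𝒵} π z · 1[P(z,w) ≤ α] ≤ α`, i.e. for `Z ∼ π` the probability
that `P(Z, w) ≤ α` is at most `α`. -/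
theorem statement2 {Z W : Type*} [Fintype Z] [Nonempty Z]
    {M : ℕ}
    (π : Z → ℝ) (hπpos : ∀ z, 0 < π z) (hπsum : ∑ z, π z = 1)
    (S : Fin M → Finset Z)
    (hne : ∀ m, (S m).Nonempty)
    (hdisj : ∀ m m', m ≠ m' → Disjoint (S m) (S m'))
    (hcover : ∀ z : Z, ∃ m, z ∈ S m)
    (idx : Z → Fin M) (hidx : ∀ z, z ∈ S (idx z))
    (T : Fin M → Z → W → ℝ) :
    ∀ (w : W) (α : ℝ), 0 ≤ α → α ≤ 1 →
      (∑ z : Z, if pValue π S T idx z w ≤ α then π z else 0) ≤ α := by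
  classical
  intro w α hα0 hα1
  have hfiber : ∀ m, Finset.univ.filter (fun z => idx z = m) = S m := by
    intro m
    ext z
    simp only [Finset.mem_filter, Finset.mem_univ, true_and]
    constructor
    · rintro rfl; exact hidx z
    · intro hz
      by_contra hne'
      exact (Finset.disjoint_left.mp (hdisj _ _ hne') (hidx z)) hz
  have hsplit : ∀ f : Z → ℝ, (∑ z : Z, f z) = ∑ m : Fin M, ∑ z ∈ S m, f z := by
    intro f
    rw [← Finset.sum_fiberwise Finset.univ idx f]
    exact Finset.sum_congr rfl fun m _ => by rw [hfiber m]
  rw [hsplit]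
  have hbound : ∀ m : Fin M,
      (∑ z ∈ S m, if pValue π S T idx z w ≤ α then π z else 0)
        ≤ α * ∑ z ∈ S m, π z := by
    intro m
    have hEq : (∑ z ∈ S m, if pValue π S T idx z w ≤ α then π z else 0)
        = ∑ z ∈ S m, if (∑ z' ∈ S m, if T m z' w ≤ T m z w then π z' else 0) /
            (∑ z' ∈ S m, π z') ≤ α then π z else 0 := by
      apply Finset.sum_congr rfl
      intro z hz
      have him : idx z = m := by
        by_contra hne'
        exact (Finset.disjoint_left.mp (hdisj _ _ hne') (hidx z)) hz
      simp [pValue, him]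
    rw [hEq]
    exact crt_key (S m) π (fun z _ => hπpos z) (fun z => T m z w) α hα0
  calc (∑ m : Fin M, ∑ z ∈ S m, if pValue π S T idx z w ≤ α then π z else 0)
      ≤ ∑ m : Fin M, α * ∑ z ∈ S m, π z :=
        Finset.sum_le_sum fun m _ => hbound m
    _ = α * ∑ m : Fin M, ∑ z ∈ S m, π z := by rw [Finset.mul_sum]
    _ = α * ∑ z : Z, π z := by rw [hsplit π]
    _ = α := by rw [hπsum, mul_one]
end

section
/- Suppose every test statistic is imputable under the null hypothesis, meaning that for every z ∈ 𝒵 and z* ∈ S_z there is a function t_{z,z*} such that T_z(z*, w) = t_{z,z*}( (w(z*))(i) for i ∈ H(z, z*) ) for all w ∈ 𝒲₀. Then the p-value is computable: there exists a function q : 𝒵 × (Fin N → ℝ) → ℝ such that P(z, w) = q(z, w(z)) for every null schedule w ∈ 𝒲₀ and every z ∈ 𝒵; that is, the p-value depends on the potential outcomes schedule only through the observed outcome vector w(z). -/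
open scoped Classical

/-- Lemma 2 of the paper: if every test statistic is
imputable under the partially sharp null hypothesis — i.e. for every `z`
and `z* ∈ S_z` the value `T_z(z*, w)` depends on the schedule `w` only
through the imputable coordinates `(w z*) i`, `i ∈ H(z, z*)` — then the
p-value is computable: there is `q` with `P(z, w) = q z (w z)` for every
null schedule `w ∈ W0` and every `z`, i.e. the p-value depends on `w`
only through the observed outcome vector `w z`. Here `W0` is the set of
schedules satisfying the null, `H` is the imputability mapping, and `f`
are the imputation functions guaranteed by the null hypothesis. -/
theorem statement5 {Z : Type*} [Fintype Z] [Nonempty Z]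
    {N : ℕ} (hN : 0 < N) {M : ℕ}
    (π : Z → ℝ) (hπpos : ∀ z, 0 < π z) (hπsum : ∑ z, π z = 1)
    (W0 : Set (Z → Fin N → ℝ))
    (H : Z → Z → Set (Fin N))
    (f : Z → Z → (Fin N → ℝ) → Fin N → ℝ)
    (hf : ∀ w ∈ W0, ∀ z z' : Z, ∀ i ∈ H z z', w z' i = f z z' (w z) i)
    (S : Fin M → Finset Z)
    (hne : ∀ m, (S m).Nonempty)
    (hdisj : ∀ m m', m ≠ m' → Disjoint (S m) (S m'))
    (idx : Z → Fin M) (hidx : ∀ z, z ∈ S (idx z))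
    (T : Fin M → Z → (Z → Fin N → ℝ) → ℝ)
    (himp : ∀ z z' : Z, z' ∈ S (idx z) →
      ∃ t : (↥(H z z') → ℝ) → ℝ,
        ∀ w ∈ W0, T (idx z) z' w = t fun i => w z' i.1) :
    ∃ q : Z → (Fin N → ℝ) → ℝ,
      ∀ w ∈ W0, ∀ z : Z, pValue π S T idx z w = q z (w z) := by
  choose t ht using himp
  refine ⟨fun z y =>
    (∑ z' ∈ S (idx z), if h : z' ∈ S (idx z) then
        (if t z z' h (fun i => f z z' y i.1) ≤ t z z (hidx z) (fun i => f z z y i.1)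
          then π z' else 0) else 0) / ∑ z' ∈ S (idx z), π z', ?_⟩
  intro w hw z
  unfold pValue
  congr 1
  refine Finset.sum_congr rfl fun z' hz' => ?_
  rw [dif_pos hz']
  have e1 : T (idx z) z' w = t z z' hz' (fun i => f z z' (w z) i.1) := by
    rw [ht z z' hz' w hw]
    congr 1
    funext i
    exact hf w hw z z' i.1 i.2
  have e2 : T (idx z) z w = t z z (hidx z) (fun i => f z z (w z) i.1) := by
    rw [ht z z (hidx z) w hw]
    congr 1
    funext i
    exact hf w hw z z i.1 i.2
  rw [e1, e2]
end

section
/- Given any partition R = {S_1, …, S_M} of 𝒵, define H_m = ⋂_{z, z* ∈ S_m} H(z, z*) for each m. If each test statistic has the form T_m(z, w) = t_m(z, (w(z))(i) for i ∈ H_m) for some function t_m, then the resulting conditional randomization test p-value is computable: there exists a function q : 𝒵 × (Fin N → ℝ) → ℝ such that P(z, w) = q(z, w(z)) for every null schedule w ∈ 𝒲₀ and every z ∈ 𝒵. -/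
open scoped Classical

/-- Proposition 2 of the paper, intersection method: given
any partition `{S m}` of `Z`, let `Hm m = ⋂_{z, z* ∈ S m} H(z, z*)`. If
each test statistic has the form `T m z w = t m z ((w z) i, i ∈ Hm m)`,
then the resulting CRT p-value is computable: there is `q` with
`P(z, w) = q z (w z)` for every null schedule `w ∈ W0` and every `z`.
Here `W0` is the set of schedules satisfying the null, `H` is the
imputability mapping, and `f` are the imputation functions guaranteed by
the null hypothesis. -/
theorem statement6 {Z : Type*} [Fintype Z] [Nonempty Z]
    {N : ℕ} (hN : 0 < N) {M : ℕ}
    (π : Z → ℝ) (hπpos : ∀ z, 0 < π z) (hπsum : ∑ z, π z = 1)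
    (W0 : Set (Z → Fin N → ℝ))
    (H : Z → Z → Set (Fin N))
    (f : Z → Z → (Fin N → ℝ) → Fin N → ℝ)
    (hf : ∀ w ∈ W0, ∀ z z' : Z, ∀ i ∈ H z z', w z' i = f z z' (w z) i)
    (S : Fin M → Finset Z)
    (hne : ∀ m, (S m).Nonempty)
    (hdisj : ∀ m m', m ≠ m' → Disjoint (S m) (S m'))
    (idx : Z → Fin M) (hidx : ∀ z, z ∈ S (idx z))
    (Hm : Fin M → Set (Fin N))
    (hHm : ∀ m, Hm m = ⋂ z ∈ S m, ⋂ z' ∈ S m, H z z')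
    (T : Fin M → Z → (Z → Fin N → ℝ) → ℝ)
    (hT : ∀ m, ∃ t : Z → (↥(Hm m) → ℝ) → ℝ,
      ∀ (z : Z) (w : Z → Fin N → ℝ), T m z w = t z fun i => w z i.1) :
    ∃ q : Z → (Fin N → ℝ) → ℝ,
      ∀ w ∈ W0, ∀ z : Z, pValue π S T idx z w = q z (w z) := by
  choose t ht using hT
  refine ⟨fun z y => (∑ z' ∈ S (idx z),
      if t (idx z) z' (fun i => f z z' y i.1) ≤ t (idx z) z (fun i => f z z y i.1)
      then π z' else 0) / ∑ z' ∈ S (idx z), π z', ?_⟩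
  intro w hw z
  have key : ∀ z'' ∈ S (idx z),
      T (idx z) z'' w = t (idx z) z'' (fun i => f z z'' (w z) i.1) := by
    intro z'' hz''
    rw [ht]
    congr 1
    funext i
    obtain ⟨j, hj⟩ := i
    refine hf w hw z z'' j ?_
    rw [hHm] at hj
    exact Set.mem_iInter₂.1 (Set.mem_iInter₂.1 hj z (hidx z)) z'' hz''
  unfold pValue
  congr 1
  refine Finset.sum_congr rfl fun z' hz' => ?_
  rw [key z' hz', key z (hidx z)]
end

section
/- Suppose the null hypothesis has a level-set structure with exposure functions D_i : 𝒵 → 𝒟 (so H(z, z*) = {i : D_i(z) = D_i(z*)} and the imputation property holds on this set), and let I ⊆ Fin N be a set of focal units. Define S_z = {z* ∈ 𝒵 : D_i(z*) = D_i(z) for all i ∈ I}. Then: (i) the family {S_z : z ∈ 𝒵} forms a partition of 𝒵 with z ∈ S_z and S_{z*} = S_z whenever z* ∈ S_z; and (ii) for any function t : 𝒵 × (I → ℝ) → ℝ, the conditional randomization test with conditioning sets S_z and test statistic T(z*, w) = t(z*, (w(z*))(i) for i ∈ I) has a computable p-value: there exists q : 𝒵 × (Fin N → ℝ) → ℝ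 with P(z, w) = q(z, w(z)) for every null schedule w ∈ 𝒲₀ and every z ∈ 𝒵. -/
open scoped Classical

/-- Proposition 3 of the paper, focal units: under a
level-set structure with exposure functions `D i : Z → 𝒟` (so
`H(z, z*) = {i : D i z = D i z*}` and the imputation property `hf` holds
on this set), fix a set `I` of focal units and let
`Sz z = {z* : D i z* = D i z for all i ∈ I}`. Then (i) the family
`{Sz z}` forms a partition of `Z`: `z ∈ Sz z` and `Sz z* = Sz z`
whenever `z* ∈ Sz z`; and (ii) for any statistic of the form
`T z* w = t z* ((w z*) i, i ∈ I)`, the CRT with conditioning sets `Sz z`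
has a computable p-value: there is `q` with `P(z, w) = q z (w z)` for
every null schedule `w ∈ W0` and every `z`. -/
theorem statement8 {Z 𝒟 : Type*} [Fintype Z] [Nonempty Z] [Countable 𝒟]
    {N : ℕ} (hN : 0 < N)
    (π : Z → ℝ) (hπpos : ∀ z, 0 < π z) (hπsum : ∑ z, π z = 1)
    (D : Fin N → Z → 𝒟)
    (H : Z → Z → Set (Fin N))
    (hH : ∀ z z' : Z, H z z' = {i | D i z = D i z'})
    (W0 : Set (Z → Fin N → ℝ))
    (f : Z → Z → (Fin N → ℝ) → Fin N → ℝ)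
    (hf : ∀ w ∈ W0, ∀ z z' : Z, ∀ i ∈ H z z', w z' i = f z z' (w z) i)
    (I : Set (Fin N))
    (t : Z → (↥I → ℝ) → ℝ)
    (T : Z → (Z → Fin N → ℝ) → ℝ)
    (hT : ∀ (z' : Z) (w : Z → Fin N → ℝ), T z' w = t z' fun i => w z' i.1)
    (Sz : Z → Finset Z)
    (hSz : ∀ z z' : Z, z' ∈ Sz z ↔ ∀ i ∈ I, D i z' = D i z) :
    (∀ z, z ∈ Sz z) ∧
    (∀ z z', z' ∈ Sz z → Sz z' = Sz z) ∧
    ∃ q : Z → (Fin N → ℝ) → ℝ, ∀ w ∈ W0, ∀ z : Z,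
      (∑ z' ∈ Sz z, if T z' w ≤ T z w then π z' else 0) /
          (∑ z' ∈ Sz z, π z') = q z (w z) := by
  refine ⟨fun z => (hSz z z).2 fun i _ => rfl, ?_, ?_⟩
  · intro z z' hz'
    ext z''
    simp only [hSz] at *
    constructor
    · intro h i hi; rw [h i hi, hz' i hi]
    · intro h i hi; rw [h i hi, ← hz' i hi]
  · refine ⟨fun z v =>
      (∑ z' ∈ Sz z, if t z' (fun i => f z z' v i.1) ≤ t z (fun i => v i.1) then π z' else 0) /
        (∑ z' ∈ Sz z, π z'), fun w hw z => ?_⟩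
    congr 1
    apply Finset.sum_congr rfl
    intro z' hz'
    have hmem : ∀ i : ↥I, i.1 ∈ H z z' := by
      intro i; rw [hH]; exact ((hSz z z').1 hz' i.1 i.2).symm
    have h1 : T z' w = t z' (fun i => f z z' (w z) i.1) := by
      rw [hT]; congr 1; funext i; exact hf w hw z z' i.1 (hmem i)
    have h2 : T z w = t z (fun i => w z i.1) := hT z w
    rw [h1, h2]
end

section
/- For every γ ∈ 𝒢 with μ(γ) > 0 and every α ∈ [0,1], the post-randomized conditional randomization test is valid: Σ_{(z,v) : g(z,v) = γ} π(z) ν(v) · 1[p(z, γ) ≤ α] ≤ α · μ(γ); that is, conditional on the post-randomized variable G = g(Z, V) taking the value γ, the probability that the randomized p-value p(Z, G) is at most α is at most α. -/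
open scoped Classical

/-- `μ γ = ∑_{(z,v) : g z v = γ} π z · ν v`, the probability that the
post-randomized conditioning variable `G = g(Z, V)` equals `γ`. -/
noncomputable def muG {Z V G : Type*} [Fintype Z] [Fintype V]
    (π : Z → ℝ) (ν : V → ℝ) (g : Z → V → G) (γ : G) : ℝ :=
  ∑ z : Z, ∑ v : V, if g z v = γ then π z * ν v else 0

/-- `π(z | γ)`, the conditional probability mass function of `Z` given
`G = g(Z, V) = γ`. -/
noncomputable def piCond {Z V G : Type*} [Fintype Z] [Fintype V]
    (π : Z → ℝ) (ν : V → ℝ) (g : Z → V → G) (z : Z) (γ : G) : ℝ :=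
  (∑ v : V, if g z v = γ then π z * ν v else 0) / muG π ν g γ

/-- The post-randomized p-value
`p(z, γ) = ∑_{z*} π(z* | γ) · 1[T_γ(z*) ≤ T_γ(z)]`. -/
noncomputable def pRand {Z V G : Type*} [Fintype Z] [Fintype V]
    (π : Z → ℝ) (ν : V → ℝ) (g : Z → V → G) (T : G → Z → ℝ)
    (z : Z) (γ : G) : ℝ :=
  ∑ z' : Z, if T γ z' ≤ T γ z then piCond π ν g z' γ else 0

/-- Theorem 2 of the paper: validity of the
post-randomized conditional randomization test. `Z ∼ π` and `V ∼ ν` are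
independent, `G = g(Z, V)`. For every `γ` with `μ(γ) > 0` and every
`α ∈ [0,1]`,
`∑_{(z,v) : g z v = γ} π z · ν v · 1[p(z, γ) ≤ α] ≤ α · μ(γ)`,
i.e. conditional on `G = γ`, the probability that the randomized p-value
`p(Z, G)` is at most `α` is at most `α`. -/
theorem statement10 {Z V G : Type*} [Fintype Z] [Fintype V]
    [Nonempty Z] [Nonempty V] [Nonempty G] [Fintype G]
    (π : Z → ℝ) (hπpos : ∀ z, 0 < π z) (hπsum : ∑ z, π z = 1)
    (ν : V → ℝ) (hν : ∀ v, 0 ≤ ν v) (hνsum : ∑ v, ν v = 1)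
    (g : Z → V → G) (T : G → Z → ℝ)
    (γ : G) (hγ : 0 < muG π ν g γ)
    (α : ℝ) (hα0 : 0 ≤ α) (hα1 : α ≤ 1) :
    (∑ z : Z, ∑ v : V,
        if g z v = γ ∧ pRand π ν g T z γ ≤ α then π z * ν v else 0) ≤
      α * muG π ν g γ := by
  classical
  set W : Z → ℝ := fun z => ∑ v : V, if g z v = γ then π z * ν v else 0 with hWdef
  have hWnn : ∀ z, 0 ≤ W z := by
    intro z
    refine Finset.sum_nonneg fun v _ => ?_
    split
    · exact mul_nonneg (hπpos z).le (hν v)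
    · exact le_rfl
  have hmu : muG π ν g γ = ∑ z, W z := rfl
  -- p-value formula
  have hp : ∀ z, pRand π ν g T z γ =
      (∑ z' : Z, if T γ z' ≤ T γ z then W z' else 0) / muG π ν g γ := by
    intro z
    rw [pRand, Finset.sum_div]
    refine Finset.sum_congr rfl fun z' _ => ?_
    by_cases h : T γ z' ≤ T γ z <;> simp [h, piCond, hWdef]
  -- rewrite LHS
  have hLHS : (∑ z : Z, ∑ v : V,
        if g z v = γ ∧ pRand π ν g T z γ ≤ α then π z * ν v else 0)
      = ∑ z : Z, if pRand π ν g T z γ ≤ α then W z else 0 := by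
    refine Finset.sum_congr rfl fun z _ => ?_
    by_cases h : pRand π ν g T z γ ≤ α
    · simp only [h, and_true, if_true, hWdef]
    · simp [h]
  rw [hLHS]
  rw [Finset.sum_ite, Finset.sum_const_zero, add_zero]
  set F := Finset.univ.filter (fun z => pRand π ν g T z γ ≤ α) with hF
  rcases F.eq_empty_or_nonempty with hFe | hFne
  · rw [hFe, Finset.sum_empty]
    positivity
  · obtain ⟨z0, hz0F, hmax⟩ := F.exists_max_image (T γ) hFne
    have hsub : F ⊆ Finset.univ.filter (fun z => T γ z ≤ T γ z0) := by
      intro z hz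
      simp only [Finset.mem_filter, Finset.mem_univ, true_and]
      exact hmax z hz
    calc ∑ z ∈ F, W z
        ≤ ∑ z ∈ Finset.univ.filter (fun z => T γ z ≤ T γ z0), W z :=
          Finset.sum_le_sum_of_subset_of_nonneg hsub fun z _ _ => hWnn z
      _ = ∑ z' : Z, if T γ z' ≤ T γ z0 then W z' else 0 := by
          rw [Finset.sum_ite, Finset.sum_const_zero, add_zero]
      _ = pRand π ν g T z0 γ * muG π ν g γ := by
          rw [hp z0, div_mul_cancel₀ _ hγ.ne']
      _ ≤ α * muG π ν g γ := by
          have hz0 : pRand π ν g T z0 γ ≤ α := by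
            simpa [hF] using hz0F
          exact mul_le_mul_of_nonneg_right hz0 hγ.le
end

section
/- Consider a collection of conditional randomization tests indexed by v ∈ 𝒱: for each v, a partition R(v) of 𝒵 with conditioning sets S_z(v) and test statistics T_z(·, ·; v) (constant on each class of R(v)), with p-value P(z, w; v) = (Σ_{z* ∈ S_z(v)} π(z*) · 1[T_z(z*, w; v) ≤ T_z(z, w; v)]) / (Σ_{z* ∈ S_z(v)} π(z*)). If the analyst draws V from any distribution on 𝒱 independently of (Z, W), then the post-randomized test is valid: for every v ∈ 𝒱, every z₀ ∈ 𝒵, every w ∈ 𝒲, and every α ∈ [0,1], Σ_{z ∈ S_{z₀}(v)} π(z) · 1[P(z, w; v) ≤ α] ≤ α · Σ_{z ∈ S_{z₀}(v)} π(z). -/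
open scoped Classical

/-- validity of a post-randomized collection of
conditional randomization tests. For each value `v` of the analyst's
randomization `V` (drawn from any distribution `ν` on the countable set
`𝒱` independently of `(Z, W)`), `R(v) = {S v m}` is a partition of `Z`
with classwise test statistics `T v m`, `S v (idx v z)` is the class
`S_z(v)` containing `z`, and
`P(z, w; v) = (∑_{z* ∈ S_z(v)} π z* · 1[T_z(z*, w; v) ≤ T_z(z, w; v)]) / (∑_{z* ∈ S_z(v)} π z*)`.
Then for every `v`, `z₀`, `w` and `α ∈ [0,1]`,
`∑_{z ∈ S_{z₀}(v)} π z · 1[P(z, w; v) ≤ α] ≤ α · ∑_{z ∈ S_{z₀}(v)} π z`. -/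
theorem statement11 {Z W 𝒱 : Type*} [Fintype Z] [Nonempty Z] [Countable 𝒱]
    {M : ℕ}
    (π : Z → ℝ) (hπpos : ∀ z, 0 < π z) (hπsum : ∑ z, π z = 1)
    (ν : 𝒱 → ℝ) (hν : ∀ v, 0 ≤ ν v) (hνsum : ∑' v, ν v = 1)
    (S : 𝒱 → Fin M → Finset Z)
    (hne : ∀ v m, (S v m).Nonempty)
    (hdisj : ∀ v m m', m ≠ m' → Disjoint (S v m) (S v m'))
    (idx : 𝒱 → Z → Fin M) (hidx : ∀ v z, z ∈ S v (idx v z))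
    (T : 𝒱 → Fin M → Z → W → ℝ)
    (P : 𝒱 → Z → W → ℝ)
    (hP : ∀ v z w, P v z w =
      (∑ z' ∈ S v (idx v z),
          if T v (idx v z) z' w ≤ T v (idx v z) z w then π z' else 0) /
        ∑ z' ∈ S v (idx v z), π z') :
    ∀ (v : 𝒱) (z₀ : Z) (w : W) (α : ℝ), 0 ≤ α → α ≤ 1 →
      (∑ z ∈ S v (idx v z₀), if P v z w ≤ α then π z else 0) ≤
        α * ∑ z ∈ S v (idx v z₀), π z := by

  intro v z₀ w α hα0 hα1
  set m := idx v z₀ with hm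
  set s := S v m with hs
  set t : Z → ℝ := fun z => T v m z w with ht
  set c : ℝ := ∑ z' ∈ s, π z' with hc
  have hcpos : 0 < c := by
    obtain ⟨z, hz⟩ := hne v m
    exact Finset.sum_pos' (fun z _ => (hπpos z).le) ⟨z, hz, hπpos z⟩
  have hidxeq : ∀ z ∈ s, idx v z = m := by
    intro z hz
    by_contra hne'
    exact (Finset.disjoint_left.mp (hdisj v _ _ hne') (hidx v z)) hz
  have hPz : ∀ z ∈ s, P v z w = (∑ z' ∈ s, if t z' ≤ t z then π z' else 0) / c := by
    intro z hz
    rw [hP v z w, hidxeq z hz]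
  set A := s.filter (fun z => P v z w ≤ α) with hA
  have hLHS : (∑ z ∈ s, if P v z w ≤ α then π z else 0) = ∑ z ∈ A, π z := by
    rw [hA, Finset.sum_filter]
  rw [hLHS]
  rcases A.eq_empty_or_nonempty with hAe | hAne
  · rw [hAe, Finset.sum_empty]
    exact mul_nonneg hα0 hcpos.le
  · obtain ⟨z', hz'A, hz'max⟩ := A.exists_max_image t hAne
    have hz's : z' ∈ s := (Finset.mem_filter.mp hz'A).1
    have hPz' : P v z' w ≤ α := (Finset.mem_filter.mp hz'A).2
    have step1 : (∑ z ∈ A, π z) ≤ ∑ z ∈ s, if t z ≤ t z' then π z else 0 := by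
      have : (∑ z ∈ A, π z) = ∑ z ∈ A, if t z ≤ t z' then π z else 0 := by
        apply Finset.sum_congr rfl
        intro z hz
        rw [if_pos (hz'max z hz)]
      rw [this]
      apply Finset.sum_le_sum_of_subset_of_nonneg (Finset.filter_subset _ _)
      intro z _ _
      split <;> simp [(hπpos z).le]
    have step2 : (∑ z ∈ s, if t z ≤ t z' then π z else 0) ≤ α * c := by
      rw [hPz z' hz's, div_le_iff₀ hcpos] at hPz'
      linarith
    linarith
end

section
/- Let N ≥ 1, let x₁, …, x_N be points of a set X, and let π₁, π₂ : X → (0, ∞) be strictly positive weight functions. Define a probability distribution on the permutations σ of {1, …, N} by P(σ) ∝ π₂(x_{σ(N)}) · ∏_{j=1}^{N-1} π₁(x_{σ(j)}). Then for every k ∈ {1, …, N}, the probability that σ(N) = k equals (π₂(x_k)/π₁(x_k)) / (Σ_{j=1}^{N} π₂(x_j)/π₁(x_j)); equivalently, for every permutation σ, P(σ) = (π₂(x_{σ(N)})/π₁(x_{σ(N)})) / ((N-1)! · Σ_{j=1}^{N} π₂(x_j)/π₁(x_j)). -/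
open scoped Classical


noncomputable def E13 (n : ℕ) : Equiv.Perm (Fin (n+1)) ≃ Fin (n+1) × Equiv.Perm (Fin n) :=
  (Equiv.mulRight (Equiv.swap (0 : Fin (n+1)) (Fin.last n))).trans Equiv.Perm.decomposeFin

lemma E13_symm_apply_last {n : ℕ} (pe : Fin (n+1) × Equiv.Perm (Fin n)) :
    ((E13 n).symm pe) (Fin.last n) = pe.1 := by
  obtain ⟨p, e⟩ := pe
  simp [E13, Equiv.Perm.mul_apply, Equiv.swap_apply_right]

lemma E13_apply_fst {n : ℕ} (σ : Equiv.Perm (Fin (n+1))) :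
    ((E13 n) σ).1 = σ (Fin.last n) := by
  have := E13_symm_apply_last ((E13 n) σ)
  rw [Equiv.symm_apply_apply] at this
  exact this.symm

lemma sum_last13 {n : ℕ} (f : Fin (n+1) → ℝ) :
    ∑ σ : Equiv.Perm (Fin (n+1)), f (σ (Fin.last n)) =
      (n.factorial : ℝ) * ∑ k, f k := by
  rw [← Equiv.sum_comp (E13 n).symm (fun σ => f (σ (Fin.last n)))]
  simp only [E13_symm_apply_last]
  rw [Fintype.sum_prod_type]
  simp only [Finset.sum_const, Finset.card_univ, Fintype.card_perm, Fintype.card_fin,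
    nsmul_eq_mul]
  rw [← Finset.mul_sum]

lemma card_fiber13 {n : ℕ} (k : Fin (n+1)) :
    (Finset.univ.filter
      (fun σ : Equiv.Perm (Fin (n+1)) => σ (Fin.last n) = k)).card = n.factorial := by
  have : (Finset.univ.filter
      (fun σ : Equiv.Perm (Fin (n+1)) => σ (Fin.last n) = k)).card
      = (Finset.univ : Finset (Equiv.Perm (Fin n))).card := by
    apply Finset.card_bij' (fun σ _ => ((E13 n) σ).2)
      (fun e _ => (E13 n).symm (k, e))
    · intro σ hσ
      exact Finset.mem_univ _
    · intro e he
      simp [Finset.mem_filter, E13_symm_apply_last]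
    · intro σ hσ
      simp only [Finset.mem_filter, Finset.mem_univ, true_and] at hσ
      have h1 : ((E13 n) σ).1 = k := by rw [E13_apply_fst]; exact hσ
      have h2 : ((k : Fin (n+1)), ((E13 n) σ).2) = (E13 n) σ := by
        rw [← h1]
      rw [h2, Equiv.symm_apply_apply]
    · intro e he
      simp
  rw [this]
  simp [Fintype.card_perm]

/-- weighted exchangeability in conformal prediction under
covariate shift: let `N = n + 1 ≥ 1`, let `x 0, …, x n` be points of
`X`, and let `π₁, π₂ : X → ℝ` be strictly positive weight functions.
Define a probability distribution on permutations `σ` of `Fin (n+1)` by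
`P σ ∝ Wt σ = π₂(x (σ last)) · ∏_{j ≠ last} π₁(x (σ j))`.
Then (i) for every `k`, the probability that `σ last = k` equals
`(π₂(x k)/π₁(x k)) / ∑_j π₂(x j)/π₁(x j)`; and (ii) for every `σ`,
`P σ = (π₂(x (σ last))/π₁(x (σ last))) / ((N-1)! · ∑_j π₂(x j)/π₁(x j))`. -/
theorem statement13 {X : Type*} (n : ℕ) (x : Fin (n + 1) → X)
    (π₁ π₂ : X → ℝ) (h1 : ∀ s, 0 < π₁ s) (h2 : ∀ s, 0 < π₂ s)
    (Wt : Equiv.Perm (Fin (n + 1)) → ℝ)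
    (hWt : ∀ σ : Equiv.Perm (Fin (n + 1)),
      Wt σ = π₂ (x (σ (Fin.last n))) *
        ∏ j ∈ Finset.univ.erase (Fin.last n), π₁ (x (σ j)))
    (P : Equiv.Perm (Fin (n + 1)) → ℝ)
    (hP : ∀ σ : Equiv.Perm (Fin (n + 1)),
      P σ = Wt σ / ∑ τ : Equiv.Perm (Fin (n + 1)), Wt τ) :
    (∀ k : Fin (n + 1),
      (∑ σ ∈ Finset.univ.filter
          (fun σ : Equiv.Perm (Fin (n + 1)) => σ (Fin.last n) = k), P σ) =
        (π₂ (x k) / π₁ (x k)) / ∑ j : Fin (n + 1), π₂ (x j) / π₁ (x j)) ∧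
    (∀ σ : Equiv.Perm (Fin (n + 1)),
      P σ = (π₂ (x (σ (Fin.last n))) / π₁ (x (σ (Fin.last n)))) /
        ((n.factorial : ℝ) * ∑ j : Fin (n + 1), π₂ (x j) / π₁ (x j))) := by
  set r : Fin (n+1) → ℝ := fun k => π₂ (x k) / π₁ (x k) with hr
  set C : ℝ := ∏ j, π₁ (x j) with hC
  have hCpos : 0 < C := Finset.prod_pos (fun j _ => h1 _)
  have hrpos : ∀ k, 0 < r k := fun k => div_pos (h2 _) (h1 _)
  have hSpos : 0 < ∑ j, r j :=
    Finset.sum_pos (fun j _ => hrpos j) Finset.univ_nonempty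
  have hfac : (n.factorial : ℝ) ≠ 0 := Nat.cast_ne_zero.mpr n.factorial_ne_zero
  have hWt' : ∀ σ : Equiv.Perm (Fin (n+1)), Wt σ = C * r (σ (Fin.last n)) := by
    intro σ
    have hπ : π₁ (x (σ (Fin.last n))) ≠ 0 := (h1 _).ne'
    have hprod : π₁ (x (σ (Fin.last n))) *
        ∏ j ∈ Finset.univ.erase (Fin.last n), π₁ (x (σ j)) = C := by
      rw [Finset.mul_prod_erase Finset.univ (fun j => π₁ (x (σ j)))
        (Finset.mem_univ _)]
      rw [hC]
      exact Equiv.prod_comp σ (fun j => π₁ (x j))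
    have hE : (∏ j ∈ Finset.univ.erase (Fin.last n), π₁ (x (σ j)))
        = C / π₁ (x (σ (Fin.last n))) := by
      rw [eq_div_iff hπ, mul_comm]; exact hprod
    rw [hWt σ, hE, hr]
    field_simp
  have hsum : (∑ τ : Equiv.Perm (Fin (n+1)), Wt τ)
      = C * ((n.factorial : ℝ) * ∑ k, r k) := by
    simp only [hWt']
    rw [← Finset.mul_sum, sum_last13]
  have hP2 : ∀ σ : Equiv.Perm (Fin (n+1)),
      P σ = r (σ (Fin.last n)) / ((n.factorial : ℝ) * ∑ k, r k) := by
    intro σ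
    rw [hP σ, hWt', hsum, mul_div_mul_left _ _ hCpos.ne']
  refine ⟨?_, hP2⟩
  intro k
  have hconst : ∀ σ ∈ Finset.univ.filter
      (fun σ : Equiv.Perm (Fin (n+1)) => σ (Fin.last n) = k),
      P σ = r k / ((n.factorial : ℝ) * ∑ j, r j) := by
    intro σ hσ
    simp only [Finset.mem_filter, Finset.mem_univ, true_and] at hσ
    rw [hP2 σ, hσ]
  rw [Finset.sum_congr rfl hconst, Finset.sum_const, card_fiber13, nsmul_eq_mul,
    mul_div_assoc', mul_div_mul_left _ _ hfac]
end

section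
/- Let N be a positive integer divisible by 4, and let z ∈ {0,1}^N satisfy Σ_{i=1}^{N} z_i = N/2. Define the balanced permutation conditioning set S_z = {z* ∈ {0,1}^N : z* is a coordinate permutation of z and Σ_{i=1}^{N} z_i z*_i = N/4}. Then z ∉ S_z. Consequently the family {S_z} violates the invariance property required of a conditional randomization test (the relation 'z* ∈ S_z' is not reflexive and the sets {S_z ∪ {z}} do not form the classes of a partition of {z ∈ {0,1}^N : Σ z_i = N/2}). -/
lemma sum_ind (N : ℕ) (P : ℕ → Prop) [DecidablePred P] :
    ∑ i : Fin N, (if P i.val then (1:ℕ) else 0) =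
      ((Finset.range N).filter P).card := by
  rw [Fin.sum_univ_eq_sum_range (fun i => if P i then (1:ℕ) else 0), Finset.card_filter]

lemma card_sub (N : ℕ) (P : ℕ → Prop) [DecidablePred P] :
    Fintype.card {x : Fin N // P x.val} = ((Finset.range N).filter P).card := by
  rw [Fintype.card_subtype, Finset.card_filter, Finset.card_filter,
    Fin.sum_univ_eq_sum_range (fun i => if P i then (1:ℕ) else 0)]

lemma perm_exists (N : ℕ) (P Q : ℕ → Prop) [DecidablePred P] [DecidablePred Q]
    (h : ((Finset.range N).filter P).card = ((Finset.range N).filter Q).card) :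
    ∃ σ : Equiv.Perm (Fin N), ∀ i : Fin N,
      (if Q i.val then (1:ℕ) else 0) = (if P (σ i).val then 1 else 0) := by
  have hc : Fintype.card {x : Fin N // Q x.val} = Fintype.card {x : Fin N // P x.val} := by
    rw [card_sub, card_sub, h]
  let e := Fintype.equivOfCardEq hc
  refine ⟨e.extendSubtype, fun i => ?_⟩
  by_cases hi : Q i.val
  · rw [if_pos hi, if_pos (e.extendSubtype_mem i hi)]
  · rw [if_neg hi, if_neg (e.extendSubtype_not_mem i hi)]

lemma mul_ind (a b : Prop) [Decidable a] [Decidable b] :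
    (if a then (1:ℕ) else 0) * (if b then 1 else 0) = if a ∧ b then 1 else 0 := by
  split_ifs <;> simp_all

/-- the balanced permutation test is not a conditional
randomization test. Let `N > 0` be divisible by 4 and, for a balanced
assignment `z ∈ {0,1}^N` (i.e. with `∑ z i = N/2`), let
`Sz z = {z* : z* is a coordinate permutation of z and ∑ z i · z* i = N/4}`
(the divisions are exact, stated here as `2 * ∑ z i = N` and
`4 * ∑ z i · z* i = N`). Then `z ∉ Sz z`; consequently the membership
relation is not reflexive and the sets `Sz z ∪ {z}` do not form the
classes of a partition of the balanced assignments (they are neither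
pairwise equal nor pairwise disjoint). -/
theorem statement14 (N : ℕ) (hN : 0 < N) (hdvd : 4 ∣ N)
    (Sz : (Fin N → ℕ) → Set (Fin N → ℕ))
    (hSz : ∀ z z' : Fin N → ℕ, z' ∈ Sz z ↔
      ((∃ σ : Equiv.Perm (Fin N), ∀ i, z' i = z (σ i)) ∧
        4 * ∑ i, z i * z' i = N)) :
    (∀ z : Fin N → ℕ, (∀ i, z i = 0 ∨ z i = 1) → 2 * ∑ i, z i = N →
      z ∉ Sz z) ∧
    ¬ (∀ z₁ z₂ : Fin N → ℕ,
        ((∀ i, z₁ i = 0 ∨ z₁ i = 1) ∧ 2 * ∑ i, z₁ i = N) →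
        ((∀ i, z₂ i = 0 ∨ z₂ i = 1) ∧ 2 * ∑ i, z₂ i = N) →
        (Sz z₁ ∪ {z₁} = Sz z₂ ∪ {z₂} ∨
          Disjoint (Sz z₁ ∪ {z₁}) (Sz z₂ ∪ {z₂}))) := by
  obtain ⟨k, hk⟩ := hdvd
  subst hk
  have hk0 : 0 < k := by omega
  constructor
  · intro z hz hsum hmem
    rw [hSz] at hmem
    obtain ⟨-, h4⟩ := hmem
    have hpt : ∀ i, z i * z i = z i := fun i => by rcases hz i with h | h <;> simp [h]
    rw [Finset.sum_congr rfl (fun i _ => hpt i)] at h4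
    have h2 : 2 * Finset.univ.sum z = 4 * k := hsum
    omega
  · intro h
    set z₁ : Fin (4*k) → ℕ := fun i => if (i:ℕ) < 2*k then 1 else 0 with hz₁
    set z₂ : Fin (4*k) → ℕ := fun i => if k ≤ (i:ℕ) ∧ (i:ℕ) < 3*k then 1 else 0 with hz₂
    set w : Fin (4*k) → ℕ := fun i => if (i:ℕ) < k ∨ 3*k ≤ (i:ℕ) then 1 else 0 with hw
    -- filter cardinalities
    have c₁ : ((Finset.range (4*k)).filter (fun i => i < 2*k)).card = 2*k := by
      have : (Finset.range (4*k)).filter (fun i => i < 2*k) = Finset.range (2*k) := by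
        ext i; simp only [Finset.mem_filter, Finset.mem_range]; omega
      rw [this, Finset.card_range]
    have c₂ : ((Finset.range (4*k)).filter (fun i => k ≤ i ∧ i < 3*k)).card = 2*k := by
      have : (Finset.range (4*k)).filter (fun i => k ≤ i ∧ i < 3*k) = Finset.Ico k (3*k) := by
        ext i; simp only [Finset.mem_filter, Finset.mem_range, Finset.mem_Ico]; omega
      rw [this, Nat.card_Ico]; omega
    have cw : ((Finset.range (4*k)).filter (fun i => i < k ∨ 3*k ≤ i)).card = 2*k := by
      have : (Finset.range (4*k)).filter (fun i => i < k ∨ 3*k ≤ i) =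
          Finset.range k ∪ Finset.Ico (3*k) (4*k) := by
        ext i
        simp only [Finset.mem_filter, Finset.mem_range, Finset.mem_union, Finset.mem_Ico]
        omega
      rw [this, Finset.card_union_of_disjoint, Finset.card_range, Nat.card_Ico]
      · omega
      · rw [Finset.disjoint_left]
        intro a ha hb
        simp only [Finset.mem_range] at ha
        simp only [Finset.mem_Ico] at hb
        omega
    have c₁₂ : ((Finset.range (4*k)).filter
        (fun i => i < 2*k ∧ (k ≤ i ∧ i < 3*k))).card = k := by
      have : (Finset.range (4*k)).filter (fun i => i < 2*k ∧ (k ≤ i ∧ i < 3*k)) =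
          Finset.Ico k (2*k) := by
        ext i; simp only [Finset.mem_filter, Finset.mem_range, Finset.mem_Ico]; omega
      rw [this, Nat.card_Ico]; omega
    have c₁w : ((Finset.range (4*k)).filter
        (fun i => i < 2*k ∧ (i < k ∨ 3*k ≤ i))).card = k := by
      have : (Finset.range (4*k)).filter (fun i => i < 2*k ∧ (i < k ∨ 3*k ≤ i)) =
          Finset.range k := by
        ext i; simp only [Finset.mem_filter, Finset.mem_range]; omega
      rw [this, Finset.card_range]
    have c₂w : ((Finset.range (4*k)).filter
        (fun i => (k ≤ i ∧ i < 3*k) ∧ (i < k ∨ 3*k ≤ i))).card = 0 := by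
      have : (Finset.range (4*k)).filter (fun i => (k ≤ i ∧ i < 3*k) ∧ (i < k ∨ 3*k ≤ i)) =
          (∅ : Finset ℕ) := by
        ext i; simp only [Finset.mem_filter, Finset.mem_range, Finset.notMem_empty, iff_false]
        omega
      rw [this, Finset.card_empty]
    -- sums
    have S₁ : ∑ i, z₁ i = 2*k := by simp only [hz₁]; rw [sum_ind (4*k) (fun n => n < 2*k), c₁]
    have S₂ : ∑ i, z₂ i = 2*k := by simp only [hz₂]; rw [sum_ind (4*k) (fun n => k ≤ n ∧ n < 3*k), c₂]
    have S₁₂ : ∑ i, z₁ i * z₂ i = k := by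
      simp only [hz₁, hz₂]
      rw [Finset.sum_congr rfl (fun i _ => mul_ind _ _)]
      rw [sum_ind (4*k) (fun i => i < 2*k ∧ (k ≤ i ∧ i < 3*k)), c₁₂]
    have S₁w : ∑ i, z₁ i * w i = k := by
      simp only [hz₁, hw]
      rw [Finset.sum_congr rfl (fun i _ => mul_ind _ _)]
      rw [sum_ind (4*k) (fun i => i < 2*k ∧ (i < k ∨ 3*k ≤ i)), c₁w]
    have S₂w : ∑ i, z₂ i * w i = 0 := by
      simp only [hz₂, hw]
      rw [Finset.sum_congr rfl (fun i _ => mul_ind _ _)]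
      rw [sum_ind (4*k) (fun i => (k ≤ i ∧ i < 3*k) ∧ (i < k ∨ 3*k ≤ i)), c₂w]
    -- memberships
    have hmem₂ : z₂ ∈ Sz z₁ := by
      rw [hSz]
      refine ⟨?_, by rw [S₁₂]⟩
      obtain ⟨σ, hσ⟩ := perm_exists (4*k) (fun i => i < 2*k) (fun i => k ≤ i ∧ i < 3*k)
        (by rw [c₁, c₂])
      exact ⟨σ, hσ⟩
    have hmemw : w ∈ Sz z₁ := by
      rw [hSz]
      refine ⟨?_, by rw [S₁w]⟩
      obtain ⟨σ, hσ⟩ := perm_exists (4*k) (fun i => i < 2*k) (fun i => i < k ∨ 3*k ≤ i)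
        (by rw [c₁, cw])
      exact ⟨σ, hσ⟩
    have hwne : w ≠ z₂ := by
      intro heq
      have h0 := congrFun heq ⟨0, by omega⟩
      simp only [hw, hz₂] at h0
      split_ifs at h0 with ha hb hb <;> omega
    have hwnot : w ∉ Sz z₂ := by
      rw [hSz]
      rintro ⟨-, h4⟩
      rw [S₂w] at h4
      omega
    have hb₁ : ∀ i, z₁ i = 0 ∨ z₁ i = 1 := fun i => by
      rw [hz₁]; dsimp only; split_ifs <;> simp
    have hb₂ : ∀ i, z₂ i = 0 ∨ z₂ i = 1 := fun i => by
      rw [hz₂]; dsimp only; split_ifs <;> simp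
    rcases h z₁ z₂ ⟨hb₁, by rw [S₁]; ring⟩ ⟨hb₂, by rw [S₂]; ring⟩ with heq | hdisj
    · have : w ∈ Sz z₂ ∪ {z₂} := heq ▸ Set.mem_union_left _ hmemw
      rcases this with hw' | hw'
      · exact hwnot hw'
      · exact hwne hw'
    · exact Set.disjoint_left.mp hdisj (Set.mem_union_left _ hmem₂)
        (Set.mem_union_right _ rfl)
end

section
/- Let 𝒵₀ and 𝒴₀ be nonempty finite sets, N a positive integer, and μ a probability mass function on 𝒵₀^N × 𝒴₀^N satisfying the permutation principle: for every permutation g of {1, …, N}, the map (z, y) ↦ ((z_{g(1)}, …, z_{g(N)}), y) preserves μ. Given any test statistic T : 𝒵₀^N × 𝒴₀^N → ℝ, define the permutation test p-value P(z, y) = (1/N!) Σ_{g ∈ Ω_N} 1[T(z_g, y) ≤ T(z, y)], where Ω_N is the set of all N! permutations of {1, …, N} and z_g = (z_{g(1)}, …, z_{g(N)}). Then for every α ∈ [0,1], μ({(z, y) : P(z, y) ≤ α}) ≤ α. -/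
open scoped Classical

lemma rank_count_le {Ω : Type*} [Fintype Ω] (a : Ω → ℝ) (k : ℕ) :
    (Finset.univ.filter (fun g : Ω =>
      (Finset.univ.filter (fun h : Ω => a h ≤ a g)).card ≤ k)).card ≤ k := by
  set S := Finset.univ.filter (fun g : Ω =>
      (Finset.univ.filter (fun h : Ω => a h ≤ a g)).card ≤ k) with hS
  rcases S.eq_empty_or_nonempty with h | h
  · simp [h]
  · obtain ⟨g, hgS, hg⟩ := S.exists_max_image a h
    have hsub : S ⊆ Finset.univ.filter (fun h : Ω => a h ≤ a g) := by
      intro x hx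
      simp only [Finset.mem_filter, Finset.mem_univ, true_and]
      exact hg x hx
    have hgk : (Finset.univ.filter (fun h : Ω => a h ≤ a g)).card ≤ k := by
      have := hgS; rw [hS, Finset.mem_filter] at this; exact this.2
    exact le_trans (Finset.card_le_card hsub) hgk


/-- validity of the permutation test of independence under
the permutation principle. `𝒵₀` and `𝒴₀` are nonempty finite sets, `N` a
positive integer, and `μ` a probability mass function on
`𝒵₀^N × 𝒴₀^N` such that for every permutation `g` of `{1, …, N}` the map
`(z, y) ↦ (z ∘ g, y)` preserves `μ`. Given any test statistic `T`, the
permutation test p-value is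
`P(z, y) = (1/N!) ∑_{g ∈ Ω_N} 1[T(z_g, y) ≤ T(z, y)]`, where `Ω_N` is
the set of all `N!` permutations and `z_g = z ∘ g`. Then for every
`α ∈ [0,1]`, `μ({(z, y) : P(z, y) ≤ α}) ≤ α`. -/
theorem statement15 {𝒵₀ 𝒴₀ : Type*} [Fintype 𝒵₀] [Fintype 𝒴₀]
    [Nonempty 𝒵₀] [Nonempty 𝒴₀]
    (N : ℕ) (hN : 0 < N)
    (μ : (Fin N → 𝒵₀) × (Fin N → 𝒴₀) → ℝ)
    (hμ : ∀ p, 0 ≤ μ p) (hμsum : ∑ p, μ p = 1)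
    (hperm : ∀ (g : Equiv.Perm (Fin N)) (z : Fin N → 𝒵₀) (y : Fin N → 𝒴₀),
      μ (z ∘ g, y) = μ (z, y))
    (T : (Fin N → 𝒵₀) → (Fin N → 𝒴₀) → ℝ)
    (P : (Fin N → 𝒵₀) → (Fin N → 𝒴₀) → ℝ)
    (hP : ∀ z y, P z y = (1 / (N.factorial : ℝ)) *
      ∑ g : Equiv.Perm (Fin N), if T (z ∘ g) y ≤ T z y then 1 else 0)
    (α : ℝ) (hα0 : 0 ≤ α) (hα1 : α ≤ 1) :
    (∑ p : (Fin N → 𝒵₀) × (Fin N → 𝒴₀),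
        if P p.1 p.2 ≤ α then μ p else 0) ≤ α := by
  have hfacpos : (0:ℝ) < N.factorial := by
    exact_mod_cast N.factorial_pos
  -- key: for each z y, at most an α-fraction of permuted p-values is ≤ α
  have key : ∀ (z : Fin N → 𝒵₀) (y : Fin N → 𝒴₀),
      ∑ g : Equiv.Perm (Fin N), (if P (z ∘ g) y ≤ α then (1:ℝ) else 0)
        ≤ α * N.factorial := by
    intro z y
    set a : Equiv.Perm (Fin N) → ℝ := fun g => T (z ∘ ⇑g) y with ha
    have hPc : ∀ g : Equiv.Perm (Fin N),
        P (z ∘ ⇑g) y = ((Finset.univ.filter (fun h => a h ≤ a g)).card : ℝ)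
          / N.factorial := by
      intro g
      rw [hP]
      have hre : ∀ h : Equiv.Perm (Fin N),
          (z ∘ ⇑g) ∘ ⇑h = z ∘ ⇑(g * h) := by
        intro h; funext i; simp [Function.comp, Equiv.Perm.mul_apply]
      have : (∑ h : Equiv.Perm (Fin N),
          if T ((z ∘ ⇑g) ∘ ⇑h) y ≤ T (z ∘ ⇑g) y then (1:ℝ) else 0)
          = ∑ h : Equiv.Perm (Fin N), if a h ≤ a g then (1:ℝ) else 0 := by
        rw [show (fun h : Equiv.Perm (Fin N) =>
            if T ((z ∘ ⇑g) ∘ ⇑h) y ≤ T (z ∘ ⇑g) y then (1:ℝ) else 0)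
            = fun h => if a (g * h) ≤ a g then (1:ℝ) else 0 from by
          funext h; rw [hre h]]
        exact Fintype.sum_equiv (Equiv.mulLeft g) _ _ (fun h => rfl)
      rw [this, Finset.sum_boole]
      ring
    set k : ℕ := ⌊α * N.factorial⌋₊ with hk
    have hcond : ∀ g : Equiv.Perm (Fin N),
        (P (z ∘ ⇑g) y ≤ α) ↔
        (Finset.univ.filter (fun h => a h ≤ a g)).card ≤ k := by
      intro g
      rw [hPc g, div_le_iff₀ hfacpos, hk]
      exact (Nat.le_floor_iff (by positivity)).symm
    calc ∑ g : Equiv.Perm (Fin N), (if P (z ∘ ⇑g) y ≤ α then (1:ℝ) else 0)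
        = ((Finset.univ.filter (fun g : Equiv.Perm (Fin N) =>
            (Finset.univ.filter (fun h => a h ≤ a g)).card ≤ k)).card : ℝ) := by
          rw [Finset.sum_boole]
          have hfe : Finset.filter (fun x : Equiv.Perm (Fin N) => P (z ∘ ⇑x) y ≤ α) Finset.univ
              = Finset.filter (fun g : Equiv.Perm (Fin N) =>
                (Finset.filter (fun h => a h ≤ a g) Finset.univ).card ≤ k)
                Finset.univ :=
            Finset.filter_congr (fun g _ => hcond g)
          rw [hfe]
      _ ≤ (k : ℝ) := by exact_mod_cast rank_count_le a k
      _ ≤ α * N.factorial := Nat.floor_le (by positivity)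
  -- sum manipulation using invariance
  have step : ∀ g : Equiv.Perm (Fin N),
      (∑ p : (Fin N → 𝒵₀) × (Fin N → 𝒴₀), if P p.1 p.2 ≤ α then μ p else 0)
      = ∑ p : (Fin N → 𝒵₀) × (Fin N → 𝒴₀),
          if P (p.1 ∘ ⇑g) p.2 ≤ α then μ p else 0 := by
    intro g
    have hre := Fintype.sum_equiv
      (Equiv.prodCongr (Equiv.arrowCongr g.symm (Equiv.refl 𝒵₀))
        (Equiv.refl (Fin N → 𝒴₀)))
      (fun p : (Fin N → 𝒵₀) × (Fin N → 𝒴₀) =>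
        if P (p.1 ∘ ⇑g) p.2 ≤ α then μ (p.1 ∘ ⇑g, p.2) else 0)
      (fun p : (Fin N → 𝒵₀) × (Fin N → 𝒴₀) =>
        if P p.1 p.2 ≤ α then μ p else 0)
      (fun p => rfl)
    rw [← hre]
    apply Finset.sum_congr rfl
    intro p _
    simp only [hperm g p.1 p.2]
  calc (∑ p : (Fin N → 𝒵₀) × (Fin N → 𝒴₀), if P p.1 p.2 ≤ α then μ p else 0)
      = (1 / (N.factorial : ℝ)) * ∑ g : Equiv.Perm (Fin N),
          ∑ p : (Fin N → 𝒵₀) × (Fin N → 𝒴₀),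
            if P (p.1 ∘ ⇑g) p.2 ≤ α then μ p else 0 := by
        rw [show (∑ g : Equiv.Perm (Fin N),
            ∑ p : (Fin N → 𝒵₀) × (Fin N → 𝒴₀),
              if P (p.1 ∘ ⇑g) p.2 ≤ α then μ p else 0)
            = ∑ _g : Equiv.Perm (Fin N),
              ∑ p : (Fin N → 𝒵₀) × (Fin N → 𝒴₀),
                if P p.1 p.2 ≤ α then μ p else 0 from
          Finset.sum_congr rfl (fun g _ => (step g).symm)]
        rw [Finset.sum_const, Finset.card_univ, Fintype.card_perm,
          Fintype.card_fin, nsmul_eq_mul]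
        field_simp
    _ = (1 / (N.factorial : ℝ)) *
        ∑ p : (Fin N → 𝒵₀) × (Fin N → 𝒴₀), μ p *
          ∑ g : Equiv.Perm (Fin N), (if P (p.1 ∘ ⇑g) p.2 ≤ α then (1:ℝ) else 0) := by
        rw [Finset.sum_comm]
        congr 1
        apply Finset.sum_congr rfl
        intro p _
        rw [Finset.mul_sum]
        apply Finset.sum_congr rfl
        intro g _
        by_cases h : P (p.1 ∘ ⇑g) p.2 ≤ α <;> simp [h]
    _ ≤ (1 / (N.factorial : ℝ)) *
        ∑ p : (Fin N → 𝒵₀) × (Fin N → 𝒴₀), μ p * (α * N.factorial) := by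
        apply mul_le_mul_of_nonneg_left _ (by positivity)
        apply Finset.sum_le_sum
        intro p _
        exact mul_le_mul_of_nonneg_left (key p.1 p.2) (hμ p)
    _ = α := by
        rw [← Finset.sum_mul, hμsum]
        field_simp
end
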